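/- Fix a graph G, a 6-assignment L for G, and L-colorings α and β of G. Suppose G has a vertex v of degree 4 with four pairwise nonadjacent neighbors w1, w2, w3, w4, each of degree 3, and let G' := G − {v, w1, w2, w3, w4}. If G' has an L-recoloring sequence transforming the restriction of α to G' into the restriction of β to G' that recolors each vertex at most 12 times, then G has an L-recoloring sequence transforming α into β that recolors each vertex at most 12 times. -/

import Mathlib

variable {V : Type} [Fintype V] [DecidableEq V]

/-- Apply a list of recoloring steps (vertex, new color) to a coloring, one by one. -/
def applySteps (α : V → ℕ) : List (V × ℕ) → (V → ℕ)
  | [] => α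
  | q :: σ => applySteps (Function.update α q.1 q.2) σ

/-- `f` is a proper `L`-coloring of the subgraph of `G` induced on the vertex set `s`. -/
def ProperOn (G : SimpleGraph V) (L : V → Finset ℕ) (s : Set V) (f : V → ℕ) : Prop :=
  (∀ v ∈ s, f v ∈ L v) ∧ ∀ u ∈ s, ∀ v ∈ s, G.Adj u v → f u ≠ f v

/-- `σ` is an `L`-recoloring sequence for the subgraph of `G` induced on `s`,
starting from the coloring `α`: every step recolors a vertex of `s`, and every
intermediate coloring (including the initial and final ones) is a proper
`L`-coloring of the induced subgraph. -/
def RecolSeqOn (G : SimpleGraph V) (L : V → Finset ℕ) (s : Set V) (α : V → ℕ)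
    (σ : List (V × ℕ)) : Prop :=
  (∀ q ∈ σ, q.1 ∈ s) ∧ ∀ n ≤ σ.length, ProperOn G L s (applySteps α (σ.take n))

/-- The number of times the recoloring sequence `σ` recolors the vertex `v`. -/
def recolors (σ : List (V × ℕ)) (v : V) : ℕ :=
  σ.countP (fun q => decide (q.1 = v))

set_option linter.unusedSectionVars false

/-! ## basic lemmas -/

@[simp] lemma applySteps_nil (α : V → ℕ) : applySteps α [] = α := rfl

@[simp] lemma applySteps_cons (α : V → ℕ) (q : V × ℕ) (l : List (V × ℕ)) :
    applySteps α (q :: l) = applySteps (Function.update α q.1 q.2) l := rfl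

lemma applySteps_append (α : V → ℕ) (l₁ l₂ : List (V × ℕ)) :
    applySteps α (l₁ ++ l₂) = applySteps (applySteps α l₁) l₂ := by
  induction l₁ generalizing α with
  | nil => rfl
  | cons q l ih => simp [ih]

lemma applySteps_of_not_mem (α : V → ℕ) (l : List (V × ℕ)) (x : V)
    (h : ∀ q ∈ l, q.1 ≠ x) : applySteps α l x = α x := by
  induction l generalizing α with
  | nil => rfl
  | cons q l ih =>
    rw [applySteps_cons, ih _ (fun q hq => h q (List.mem_cons_of_mem _ hq)),
      Function.update_of_ne]
    · exact fun hx => h q (List.mem_cons_self) (by rw [hx])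

lemma applySteps_congr {s : Set V} {f g : V → ℕ} (hfg : ∀ x ∈ s, f x = g x)
    (l : List (V × ℕ)) (hl : ∀ q ∈ l, q.1 ∈ s) :
    ∀ x ∈ s, applySteps f l x = applySteps g l x := by
  induction l generalizing f g with
  | nil => exact hfg
  | cons q l ih =>
    intro x hx
    rw [applySteps_cons, applySteps_cons]
    refine ih ?_ (fun q hq => hl q (List.mem_cons_of_mem _ hq)) x hx
    intro y hy
    rcases eq_or_ne y q.1 with rfl | hne
    · simp
    · rw [Function.update_of_ne hne, Function.update_of_ne hne]; exact hfg y hy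

lemma ProperOn.congr {G : SimpleGraph V} {L : V → Finset ℕ} {s : Set V} {f g : V → ℕ}
    (h : ProperOn G L s f) (hfg : ∀ x ∈ s, f x = g x) : ProperOn G L s g := by
  refine ⟨fun x hx => hfg x hx ▸ h.1 x hx, fun u hu w hw ha => ?_⟩
  rw [← hfg u hu, ← hfg w hw]; exact h.2 u hu w hw ha

lemma recolSeqOn_nil {G : SimpleGraph V} {L : V → Finset ℕ} {s : Set V} {α : V → ℕ} :
    RecolSeqOn G L s α [] ↔ ProperOn G L s α := by
  constructor
  · intro h; exact h.2 0 (by simp)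
  · intro h; exact ⟨by simp, fun n hn => by simpa using h⟩

lemma recolSeqOn_cons {G : SimpleGraph V} {L : V → Finset ℕ} {s : Set V} {α : V → ℕ}
    {u : V} {c : ℕ} {l : List (V × ℕ)} :
    RecolSeqOn G L s α ((u, c) :: l) ↔
      u ∈ s ∧ ProperOn G L s α ∧ RecolSeqOn G L s (Function.update α u c) l := by
  constructor
  · intro h
    refine ⟨h.1 _ (List.mem_cons_self), by simpa using h.2 0 (by simp), ?_, ?_⟩
    · exact fun q hq => h.1 q (List.mem_cons_of_mem _ hq)
    · intro n hn
      have := h.2 (n + 1) (by simpa using hn)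
      simpa using this
  · rintro ⟨hu, hp, hsteps, hrec⟩
    refine ⟨?_, ?_⟩
    · intro q hq
      rcases List.mem_cons.1 hq with rfl | hq
      · exact hu
      · exact hsteps q hq
    · intro n hn
      cases n with
      | zero => simpa using hp
      | succ n => simpa using hrec n (by simpa using hn)

lemma RecolSeqOn.proper {G : SimpleGraph V} {L : V → Finset ℕ} {s : Set V} {α : V → ℕ}
    {l : List (V × ℕ)} (h : RecolSeqOn G L s α l) : ProperOn G L s α := by
  simpa using h.2 0 (by simp)

lemma RecolSeqOn.proper_final {G : SimpleGraph V} {L : V → Finset ℕ} {s : Set V} {α : V → ℕ}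
    {l : List (V × ℕ)} (h : RecolSeqOn G L s α l) : ProperOn G L s (applySteps α l) := by
  simpa using h.2 l.length le_rfl

lemma recolSeqOn_append {G : SimpleGraph V} {L : V → Finset ℕ} {s : Set V} {α : V → ℕ}
    {l₁ l₂ : List (V × ℕ)} (h₁ : RecolSeqOn G L s α l₁)
    (h₂ : RecolSeqOn G L s (applySteps α l₁) l₂) :
    RecolSeqOn G L s α (l₁ ++ l₂) := by
  induction l₁ generalizing α with
  | nil => simpa using h₂
  | cons q l ih =>
    obtain ⟨u, c⟩ := q
    rw [recolSeqOn_cons] at h₁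
    rw [List.cons_append, recolSeqOn_cons]
    exact ⟨h₁.1, h₁.2.1, ih h₁.2.2 (by simpa using h₂)⟩

lemma RecolSeqOn.congr {G : SimpleGraph V} {L : V → Finset ℕ} {s : Set V} {f g : V → ℕ}
    {l : List (V × ℕ)} (h : RecolSeqOn G L s f l) (hfg : ∀ x ∈ s, f x = g x) :
    RecolSeqOn G L s g l := by
  induction l generalizing f g with
  | nil => rw [recolSeqOn_nil] at h ⊢; exact h.congr hfg
  | cons q l ih =>
    obtain ⟨u, c⟩ := q
    rw [recolSeqOn_cons] at h ⊢
    refine ⟨h.1, h.2.1.congr hfg, ih h.2.2 ?_⟩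
    intro y hy
    rcases eq_or_ne y u with rfl | hne
    · simp
    · rw [Function.update_of_ne hne, Function.update_of_ne hne]; exact hfg y hy

@[simp] lemma recolors_nil (x : V) : recolors ([] : List (V × ℕ)) x = 0 := rfl

lemma recolors_cons (q : V × ℕ) (l : List (V × ℕ)) (x : V) :
    recolors (q :: l) x = (if q.1 = x then 1 else 0) + recolors l x := by
  simp only [recolors, List.countP_cons]
  by_cases h : q.1 = x <;> simp [h] <;> omega

lemma recolors_append (l₁ l₂ : List (V × ℕ)) (x : V) :
    recolors (l₁ ++ l₂) x = recolors l₁ x + recolors l₂ x := by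
  simp [recolors, List.countP_append]

lemma recolors_eq_zero {l : List (V × ℕ)} {x : V} (h : ∀ q ∈ l, q.1 ≠ x) :
    recolors l x = 0 := by
  simp only [recolors, List.countP_eq_zero]
  intro q hq; simpa using h q hq

/-! ## phi0 -/

def phi0 : ℕ → ℕ → ℕ
  | m, 0 => (m + 1) / 2
  | m, (r + 1) => if m = 0 then 0 else 1 + phi0 (m - 3) r

lemma phi0_zero_left : ∀ r, phi0 0 r = 0
  | 0 => rfl
  | (r + 1) => by simp [phi0]

lemma phi0_step_zero {m : ℕ} (hm : 1 ≤ m) : phi0 m 0 = 1 + phi0 (m - 2) 0 := by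
  show (m + 1) / 2 = 1 + (m - 2 + 1) / 2
  omega

lemma phi0_step_succ {m r : ℕ} (hm : 1 ≤ m) : phi0 m (r + 1) = 1 + phi0 (m - 3) r := by
  show (if m = 0 then 0 else 1 + phi0 (m - 3) r) = _
  rw [if_neg (by omega)]

lemma phi0_mono_left (r : ℕ) : ∀ {m m' : ℕ}, m ≤ m' → phi0 m r ≤ phi0 m' r := by
  induction r with
  | zero => intro m m' h; show (m+1)/2 ≤ (m'+1)/2; omega
  | succ r ih =>
    intro m m' h
    rcases Nat.eq_zero_or_pos m with rfl | hm
    · rw [phi0_zero_left]; exact Nat.zero_le _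
    · rw [phi0_step_succ hm, phi0_step_succ (by omega)]
      exact Nat.add_le_add_left (ih (by omega)) _

lemma phi0_24_2 : phi0 24 2 = 11 := by
  rw [phi0_step_succ (by norm_num), phi0_step_succ (by norm_num)]
  norm_num [phi0]

/-! ## countP bound -/

lemma countP_le_two {p : V × ℕ → Bool} {a b : V} {l : List (V × ℕ)}
    (h : ∀ q ∈ l, p q = true → q.1 = a ∨ q.1 = b) :
    l.countP p ≤ recolors l a + recolors l b := by
  induction l with
  | nil => simp
  | cons q l ih =>
    have ih' := ih (fun q hq => h q (List.mem_cons_of_mem _ hq))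
    rw [List.countP_cons, recolors_cons, recolors_cons]
    by_cases hp : p q = true
    · rcases h q (List.mem_cons_self) hp with h1 | h1 <;> simp [hp, h1] <;> omega
    · simp only [hp]; simp at hp; simp [hp]; omega
lemma exists_notin {L : Finset ℕ} (hL : L.card = 6) {F : Finset ℕ} (hF : F.card ≤ 5) :
    ∃ c ∈ L, c ∉ F := by
  by_contra h
  push_neg at h
  have := Finset.card_le_card h
  omega

def relSteps (G : SimpleGraph V) [DecidableRel G.Adj] (w : V) (ρ : List (V × ℕ)) :
    List (V × ℕ) := ρ.filter (fun q => decide (G.Adj q.1 w))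

def mcount (G : SimpleGraph V) [DecidableRel G.Adj] (w : V) (ρ : List (V × ℕ)) : ℕ :=
  (relSteps G w ρ).length

def Cov (G : SimpleGraph V) [DecidableRel G.Adj] (w : V) (γ : V → ℕ) (k : ℕ)
    (ρ : List (V × ℕ)) : Prop :=
  ∀ q ∈ (relSteps G w ρ).take k, q.2 ≠ γ w

lemma relSteps_cons_pos {G : SimpleGraph V} [DecidableRel G.Adj] {w u : V} {c : ℕ}
    {ρ : List (V × ℕ)} (h : G.Adj u w) :
    relSteps G w ((u, c) :: ρ) = (u, c) :: relSteps G w ρ := by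
  simp [relSteps, h]

lemma relSteps_cons_neg {G : SimpleGraph V} [DecidableRel G.Adj] {w u : V} {c : ℕ}
    {ρ : List (V × ℕ)} (h : ¬ G.Adj u w) :
    relSteps G w ((u, c) :: ρ) = relSteps G w ρ := by
  simp [relSteps, h]

lemma cov_zero {G : SimpleGraph V} [DecidableRel G.Adj] {w : V} {γ : V → ℕ}
    {ρ : List (V × ℕ)} : Cov G w γ 0 ρ := by
  intro q hq; simp at hq

lemma ProperOn.update_univ {G : SimpleGraph V} {L : V → Finset ℕ} {γ : V → ℕ}
    (h : ProperOn G L Set.univ γ) {x : V} {d : ℕ} (hd : d ∈ L x)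
    (hnb : ∀ y, G.Adj x y → d ≠ γ y) :
    ProperOn G L Set.univ (Function.update γ x d) := by
  constructor
  · intro y _
    rcases eq_or_ne y x with rfl | hy
    · simpa using hd
    · rw [Function.update_of_ne hy]; exact h.1 y trivial
  · intro a _ b _ hab
    rcases eq_or_ne a x with rfl | ha
    · rw [Function.update_self, Function.update_of_ne (G.ne_of_adj hab).symm]
      exact hnb b hab
    · rw [Function.update_of_ne ha]
      rcases eq_or_ne b x with rfl | hb
      · rw [Function.update_self]
        exact fun he => hnb a hab.symm he.symm
      · rw [Function.update_of_ne hb]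
        exact h.2 a trivial b trivial hab
lemma insert_one
    (G : SimpleGraph V) [DecidableRel G.Adj] (L : V → Finset ℕ) (S : Set V)
    (v : V) (W A B : Fin 4 → V)
    (hW : Function.Injective W)
    (hL : ∀ x, (L x).card = 6)
    (hvS : v ∉ S) (hWS : ∀ i, W i ∉ S) (hvW : ∀ i, v ≠ W i)
    (hadjv : ∀ x, G.Adj v x → ∃ i, x = W i)
    (hadjW : ∀ i x, G.Adj (W i) x → x = v ∨ x = A i ∨ x = B i)
    (hAS : ∀ i, A i ∈ S) (hBS : ∀ i, B i ∈ S)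
    (γ : V → ℕ) (K R : Fin 4 → ℕ) (u : V) (c : ℕ) (ρ' : List (V × ℕ)) (i : Fin 4)
    (hγ : ProperOn G L Set.univ γ)
    (hcov : ∀ j, Cov G (W j) γ (K j) ((u, c) :: ρ'))
    (huS : u ∈ S) :
    ∃ (ins : List (V × ℕ)) (K' R' : Fin 4 → ℕ),
      (∀ q ∈ ins, q.1 = v ∨ q.1 = W i) ∧
      RecolSeqOn G L Set.univ γ ins ∧
      (∀ j, j ≠ i → K' j = K j) ∧
      (G.Adj u (W i) → 1 ≤ K' i) ∧
      (∀ j, Cov G (W j) (applySteps γ ins) (K' j) ((u, c) :: ρ')) ∧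
      (∀ j, recolors ins (W j)
          + phi0 (mcount G (W j) ((u, c) :: ρ') - K' j) (R' j)
          ≤ phi0 (mcount G (W j) ((u, c) :: ρ') - K j) (R j)) ∧
      (recolors ins v + ∑ j, R' j ≤ ∑ j, R j) := by
  by_cases hA : G.Adj u (W i) ∧ K i = 0
  case neg =>
    refine ⟨[], K, R, by simp, recolSeqOn_nil.2 hγ, fun j _ => rfl, ?_, by simpa using hcov,
      fun j => by simp, by simp⟩
    intro h
    rcases Nat.eq_zero_or_pos (K i) with h0 | h0
    · exact absurd ⟨h, h0⟩ hA
    · exact h0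
  case pos =>
  obtain ⟨hrel, hKi⟩ := hA
  have hWiv : W i ≠ v := fun h => (hvW i) h.symm
  have hAiv : A i ≠ v := fun h => hvS (h ▸ hAS i)
  have hBiv : B i ≠ v := fun h => hvS (h ▸ hBS i)
  have hrelc : relSteps G (W i) ((u, c) :: ρ') = (u, c) :: relSteps G (W i) ρ' :=
    relSteps_cons_pos hrel
  have hm : 1 ≤ mcount G (W i) ((u, c) :: ρ') := by
    rw [mcount, hrelc]; simp
  have hWne : ∀ j, j ≠ i → W j ≠ W i := fun j hj h => hj (hW h)
  rcases hR : R i with _ | r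
  · -- small block (R i = 0), block size 2
    have hT2 : ((((relSteps G (W i) ((u, c) :: ρ')).take 2).map Prod.snd).toFinset).card ≤ 2 := by
      refine le_trans (List.toFinset_card_le _) ?_
      rw [List.length_map, List.length_take]
      exact min_le_left _ _
    set T : Finset ℕ :=
      (((relSteps G (W i) ((u, c) :: ρ')).take 2).map Prod.snd).toFinset with hTdef
    set Fb : Finset ℕ := insert (γ (A i)) (insert (γ (B i)) (insert (γ v) T)) with hFbdef
    have hFb : Fb.card ≤ 5 := by
      have h2 : (insert (γ v) T).card ≤ 3 := (Finset.card_insert_le _ _).trans (by omega)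
      have h3 : (insert (γ (B i)) (insert (γ v) T)).card ≤ 4 :=
        (Finset.card_insert_le _ _).trans (by omega)
      exact (Finset.card_insert_le _ _).trans (by omega)
    obtain ⟨cs, hcsL, hcsF⟩ := exists_notin (hL (W i)) hFb
    have hcsA : cs ≠ γ (A i) := fun h => hcsF (by rw [h, hFbdef]; simp)
    have hcsB : cs ≠ γ (B i) := fun h => hcsF (by rw [h, hFbdef]; simp)
    have hcsv : cs ≠ γ v := fun h => hcsF (by rw [h, hFbdef]; simp)
    have hcsT : ∀ q ∈ (relSteps G (W i) ((u, c) :: ρ')).take 2, q.2 ≠ cs := by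
      intro q hq he
      refine hcsF ?_
      rw [hFbdef]
      simp only [Finset.mem_insert, List.mem_toFinset, List.mem_map, hTdef]
      exact Or.inr (Or.inr (Or.inr ⟨q, hq, he⟩))
    have hprop2 : ProperOn G L Set.univ (Function.update γ (W i) cs) := by
      refine hγ.update_univ hcsL ?_
      intro y hy
      rcases hadjW i y hy with rfl | rfl | rfl
      exacts [hcsv, hcsA, hcsB]
    have happ : applySteps γ [(W i, cs)] = Function.update γ (W i) cs := rfl
    refine ⟨[(W i, cs)], Function.update K i 2, R, by simp, ?_, ?_, ?_, ?_, ?_, by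
      rw [recolors_eq_zero (by simp [hWiv])]; simp⟩
    · exact recolSeqOn_cons.2 ⟨trivial, hγ, recolSeqOn_nil.2 hprop2⟩
    · exact fun j hj => Function.update_of_ne hj _ _
    · intro _; rw [Function.update_self]; omega
    · intro j q hq
      rw [happ]
      rcases eq_or_ne j i with rfl | hj
      · rw [Function.update_self]
        rw [Function.update_self] at hq
        exact hcsT q hq
      · rw [Function.update_of_ne (hWne j hj)]
        rw [Function.update_of_ne hj] at hq
        exact hcov j q hq
    · intro j
      rcases eq_or_ne j i with rfl | hj
      · have h1 : recolors [(W j, cs)] (W j) = 1 := by simp [recolors]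
        rw [h1, Function.update_self, hKi, Nat.sub_zero, hR, phi0_step_zero hm]
      · rw [recolors_eq_zero (by simp [(hWne j hj).symm]), Function.update_of_ne hj]
        omega
  · -- big block (R i = r + 1), block size 3
    have hT3 : ((((relSteps G (W i) ((u, c) :: ρ')).take 3).map Prod.snd).toFinset).card ≤ 3 := by
      refine le_trans (List.toFinset_card_le _) ?_
      rw [List.length_map, List.length_take]
      exact min_le_left _ _
    set T : Finset ℕ :=
      (((relSteps G (W i) ((u, c) :: ρ')).take 3).map Prod.snd).toFinset with hTdef
    set Fb : Finset ℕ := insert (γ (A i)) (insert (γ (B i)) T) with hFbdef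
    have hFb : Fb.card ≤ 5 := by
      have h3 : (insert (γ (B i)) T).card ≤ 4 := (Finset.card_insert_le _ _).trans (by omega)
      exact (Finset.card_insert_le _ _).trans (by omega)
    obtain ⟨cs, hcsL, hcsF⟩ := exists_notin (hL (W i)) hFb
    have hcsA : cs ≠ γ (A i) := fun h => hcsF (by rw [h, hFbdef]; simp)
    have hcsB : cs ≠ γ (B i) := fun h => hcsF (by rw [h, hFbdef]; simp)
    have hcsT : ∀ q ∈ (relSteps G (W i) ((u, c) :: ρ')).take 3, q.2 ≠ cs := by
      intro q hq he
      refine hcsF ?_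
      rw [hFbdef]
      simp only [Finset.mem_insert, List.mem_toFinset, List.mem_map, hTdef]
      exact Or.inr (Or.inr ⟨q, hq, he⟩)
    have hsum : ∑ j, Function.update R i r j + (r + 1) = ∑ j, R j + r := by
      rw [Finset.sum_update_of_mem (Finset.mem_univ i),
        Finset.sum_eq_sum_sdiff_singleton_add (Finset.mem_univ i) R, hR]
      omega
    by_cases hzv : cs = γ v
    · -- assist: move v first
      set Fv : Finset ℕ := insert (γ (W 0)) (insert (γ (W 1)) (insert (γ (W 2))
        (insert (γ (W 3)) ({cs} : Finset ℕ)))) with hFvdef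
      have hFv : Fv.card ≤ 5 := by
        have h1 : (insert (γ (W 3)) ({cs} : Finset ℕ)).card ≤ 2 :=
          (Finset.card_insert_le _ _).trans (by simp)
        have h2 : (insert (γ (W 2)) (insert (γ (W 3)) ({cs} : Finset ℕ))).card ≤ 3 :=
          (Finset.card_insert_le _ _).trans (by omega)
        have h3 : (insert (γ (W 1)) (insert (γ (W 2))
            (insert (γ (W 3)) ({cs} : Finset ℕ)))).card ≤ 4 :=
          (Finset.card_insert_le _ _).trans (by omega)
        exact (Finset.card_insert_le _ _).trans (by omega)
      obtain ⟨z, hzL, hzF⟩ := exists_notin (hL v) hFv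
      have hzW : ∀ j, z ≠ γ (W j) := by
        intro j
        fin_cases j <;> exact fun h => hzF (by rw [h, hFvdef]; simp)
      have hzcs : z ≠ cs := fun h => hzF (by rw [h, hFvdef]; simp)
      have hprop1 : ProperOn G L Set.univ (Function.update γ v z) := by
        refine hγ.update_univ hzL ?_
        intro y hy
        obtain ⟨j, rfl⟩ := hadjv y hy
        exact hzW j
      have hprop2 : ProperOn G L Set.univ
          (Function.update (Function.update γ v z) (W i) cs) := by
        refine hprop1.update_univ hcsL ?_
        intro y hy
        rcases hadjW i y hy with rfl | rfl | rfl
        · rw [Function.update_self]; exact fun h => hzcs h.symm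
        · rw [Function.update_of_ne hAiv]; exact hcsA
        · rw [Function.update_of_ne hBiv]; exact hcsB
      have happ : applySteps γ [(v, z), (W i, cs)]
          = Function.update (Function.update γ v z) (W i) cs := rfl
      refine ⟨[(v, z), (W i, cs)], Function.update K i 3, Function.update R i r,
        by simp, ?_, ?_, ?_, ?_, ?_, ?_⟩
      · exact recolSeqOn_cons.2 ⟨trivial, hγ,
          recolSeqOn_cons.2 ⟨trivial, hprop1, recolSeqOn_nil.2 hprop2⟩⟩
      · exact fun j hj => Function.update_of_ne hj _ _
      · intro _; rw [Function.update_self]; omega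
      · intro j q hq
        rw [happ]
        rcases eq_or_ne j i with rfl | hj
        · rw [Function.update_self]
          rw [Function.update_self] at hq
          exact hcsT q hq
        · rw [Function.update_of_ne (hWne j hj), Function.update_of_ne (hvW j).symm]
          rw [Function.update_of_ne hj] at hq
          exact hcov j q hq
      · intro j
        rcases eq_or_ne j i with rfl | hj
        · have h1 : recolors [(v, z), (W j, cs)] (W j) = 1 := by
            simp [recolors, hWiv.symm]
          rw [h1, Function.update_self, Function.update_self, hKi, Nat.sub_zero, hR,
            phi0_step_succ hm]
        · rw [recolors_eq_zero (by simp [(hWne j hj).symm, (hvW j)]),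
            Function.update_of_ne hj, Function.update_of_ne hj]
          omega
      · have h1 : recolors [(v, z), (W i, cs)] v = 1 := by
          simp [recolors, hWiv]
        rw [h1]
        omega
    · -- no assist
      have hprop2 : ProperOn G L Set.univ (Function.update γ (W i) cs) := by
        refine hγ.update_univ hcsL ?_
        intro y hy
        rcases hadjW i y hy with rfl | rfl | rfl
        exacts [hzv, hcsA, hcsB]
      have happ : applySteps γ [(W i, cs)] = Function.update γ (W i) cs := rfl
      refine ⟨[(W i, cs)], Function.update K i 3, Function.update R i r,
        by simp, ?_, ?_, ?_, ?_, ?_, ?_⟩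
      · exact recolSeqOn_cons.2 ⟨trivial, hγ, recolSeqOn_nil.2 hprop2⟩
      · exact fun j hj => Function.update_of_ne hj _ _
      · intro _; rw [Function.update_self]; omega
      · intro j q hq
        rw [happ]
        rcases eq_or_ne j i with rfl | hj
        · rw [Function.update_self]
          rw [Function.update_self] at hq
          exact hcsT q hq
        · rw [Function.update_of_ne (hWne j hj)]
          rw [Function.update_of_ne hj] at hq
          exact hcov j q hq
      · intro j
        rcases eq_or_ne j i with rfl | hj
        · have h1 : recolors [(W j, cs)] (W j) = 1 := by simp [recolors]
          rw [h1, Function.update_self, Function.update_self, hKi, Nat.sub_zero, hR,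
            phi0_step_succ hm]
        · rw [recolors_eq_zero (by simp [(hWne j hj).symm]),
            Function.update_of_ne hj, Function.update_of_ne hj]
          omega
      · rw [recolors_eq_zero (by simp [hWiv])]
        omega
lemma insert_upto
    (G : SimpleGraph V) [DecidableRel G.Adj] (L : V → Finset ℕ) (S : Set V)
    (v : V) (W A B : Fin 4 → V)
    (hW : Function.Injective W)
    (hL : ∀ x, (L x).card = 6)
    (hvS : v ∉ S) (hWS : ∀ i, W i ∉ S) (hvW : ∀ i, v ≠ W i)
    (hadjv : ∀ x, G.Adj v x → ∃ i, x = W i)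
    (hadjW : ∀ i x, G.Adj (W i) x → x = v ∨ x = A i ∨ x = B i)
    (hAS : ∀ i, A i ∈ S) (hBS : ∀ i, B i ∈ S)
    (γ : V → ℕ) (K R : Fin 4 → ℕ) (u : V) (c : ℕ) (ρ' : List (V × ℕ))
    (hγ : ProperOn G L Set.univ γ)
    (hcov : ∀ j, Cov G (W j) γ (K j) ((u, c) :: ρ'))
    (huS : u ∈ S) :
    ∀ n : ℕ, n ≤ 4 →
    ∃ (ins : List (V × ℕ)) (K' R' : Fin 4 → ℕ),
      (∀ q ∈ ins, q.1 = v ∨ ∃ i, q.1 = W i) ∧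
      RecolSeqOn G L Set.univ γ ins ∧
      (∀ j : Fin 4, (j : ℕ) < n → G.Adj u (W j) → 1 ≤ K' j) ∧
      (∀ j, Cov G (W j) (applySteps γ ins) (K' j) ((u, c) :: ρ')) ∧
      (∀ j, recolors ins (W j)
          + phi0 (mcount G (W j) ((u, c) :: ρ') - K' j) (R' j)
          ≤ phi0 (mcount G (W j) ((u, c) :: ρ') - K j) (R j)) ∧
      (recolors ins v + ∑ j, R' j ≤ ∑ j, R j) := by
  intro n
  induction n with
  | zero =>
    intro _
    exact ⟨[], K, R, by simp, recolSeqOn_nil.2 hγ, fun j hj => by omega,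
      by simpa using hcov, fun j => by simp, by simp⟩
  | succ n ihn =>
    intro hn4
    obtain ⟨ins₁, K₁, R₁, ha1, hb1, hd1, he1, hf1, hg1⟩ := ihn (by omega)
    have hγ₁ : ProperOn G L Set.univ (applySteps γ ins₁) := hb1.proper_final
    obtain ⟨ins₂, K₂, R₂, ha2, hb2, hc2, hd2, he2, hf2, hg2⟩ :=
      insert_one G L S v W A B hW hL hvS hWS hvW hadjv hadjW hAS hBS
        (applySteps γ ins₁) K₁ R₁ u c ρ' ⟨n, by omega⟩ hγ₁ he1 huS
    refine ⟨ins₁ ++ ins₂, K₂, R₂, ?_, ?_, ?_, ?_, ?_, ?_⟩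
    · intro q hq
      rcases List.mem_append.1 hq with h | h
      · exact ha1 q h
      · rcases ha2 q h with h' | h'
        · exact Or.inl h'
        · exact Or.inr ⟨_, h'⟩
    · exact recolSeqOn_append hb1 hb2
    · intro j hj hadj
      rcases Nat.lt_or_ge (j : ℕ) n with h | h
      · have hji : j ≠ (⟨n, by omega⟩ : Fin 4) := by
          intro hh
          rw [hh] at h
          exact absurd h (by simp)
        rw [hc2 j hji]
        exact hd1 j h hadj
      · have hji : j = (⟨n, by omega⟩ : Fin 4) := by
          apply Fin.ext
          simp only []
          omega
        rw [hji]
        exact hd2 (hji ▸ hadj)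
    · intro j
      rw [applySteps_append]
      exact he2 j
    · intro j
      have h1 := hf1 j
      have h2 := hf2 j
      rw [recolors_append]
      omega
    · rw [recolors_append]
      omega
lemma main_ind
    (G : SimpleGraph V) [DecidableRel G.Adj] (L : V → Finset ℕ) (S : Set V)
    (v : V) (W A B : Fin 4 → V)
    (hW : Function.Injective W)
    (hL : ∀ x, (L x).card = 6)
    (hvS : v ∉ S) (hWS : ∀ i, W i ∉ S) (hvW : ∀ i, v ≠ W i)
    (hadjv : ∀ x, G.Adj v x → ∃ i, x = W i)
    (hadjW : ∀ i x, G.Adj (W i) x → x = v ∨ x = A i ∨ x = B i)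
    (hAS : ∀ i, A i ∈ S) (hBS : ∀ i, B i ∈ S)
    (htot : ∀ x, x ∈ S ∨ x = v ∨ ∃ i, x = W i) :
    ∀ (ρ : List (V × ℕ)) (γ : V → ℕ) (K R : Fin 4 → ℕ),
      ProperOn G L Set.univ γ →
      RecolSeqOn G L S γ ρ →
      (∀ j, Cov G (W j) γ (K j) ρ) →
      ∃ τ : List (V × ℕ),
        RecolSeqOn G L Set.univ γ τ ∧
        (∀ x ∈ S, applySteps γ τ x = applySteps γ ρ x) ∧
        (∀ x ∈ S, recolors τ x = recolors ρ x) ∧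
        (∀ j, recolors τ (W j) ≤ phi0 (mcount G (W j) ρ - K j) (R j)) ∧
        recolors τ v ≤ ∑ j, R j := by
  intro ρ
  induction ρ with
  | nil =>
    intro γ K R hγ _ _
    exact ⟨[], recolSeqOn_nil.2 hγ, by simp, by simp, by simp, by simp⟩
  | cons q ρ' ih =>
    obtain ⟨u, c⟩ := q
    intro γ K R hγ hval hcov
    rw [recolSeqOn_cons] at hval
    obtain ⟨huS, hpS, hval'⟩ := hval
    obtain ⟨ins, K₄, R₄, hsteps, hrseq, hK4, hcov4, hphi4, hv4⟩ :=
      insert_upto G L S v W A B hW hL hvS hWS hvW hadjv hadjW hAS hBS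
        γ K R u c ρ' hγ hcov huS 4 le_rfl
    have hγ₄ : ProperOn G L Set.univ (applySteps γ ins) := hrseq.proper_final
    have hinsS : ∀ x ∈ S, applySteps γ ins x = γ x := by
      intro x hx
      refine applySteps_of_not_mem γ ins x ?_
      intro q hq he
      rcases hsteps q hq with h | ⟨i, h⟩
      · rw [h] at he; exact hvS (he ▸ hx)
      · rw [h] at he; exact hWS i (he ▸ hx)
    have hunS : u ≠ v := fun h => hvS (h ▸ huS)
    have hunW : ∀ j, u ≠ W j := fun j h => hWS j (h ▸ huS)
    have hcL : c ∈ L u := by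
      have := hval'.proper.1 u huS
      simpa using this
    have hcne : ∀ y, G.Adj u y → c ≠ applySteps γ ins y := by
      intro y hy
      rcases htot y with hyS | rfl | ⟨j, rfl⟩
      · have h1 : ProperOn G L S (Function.update (applySteps γ ins) u c) := by
          refine hval'.proper.congr ?_
          intro x hx
          rcases eq_or_ne x u with rfl | hxu
          · simp
          · rw [Function.update_of_ne hxu, Function.update_of_ne hxu]
            exact (hinsS x hx).symm
        have h2 := h1.2 u huS y hyS hy
        rwa [Function.update_self, Function.update_of_ne (G.ne_of_adj hy).symm] at h2
      · exfalso
        obtain ⟨j, hj⟩ := hadjv u hy.symm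
        exact hWS j (hj ▸ huS)
      · have h1 : 1 ≤ K₄ j := hK4 j j.isLt hy
        have h2 := hcov4 j
        refine h2 ((u, c)) ?_
        rw [relSteps_cons_pos hy]
        obtain ⟨k, hk⟩ : ∃ k, K₄ j = k + 1 := ⟨K₄ j - 1, by omega⟩
        rw [hk, List.take_succ_cons]
        exact List.mem_cons_self
    have hγ₅ : ProperOn G L Set.univ (Function.update (applySteps γ ins) u c) :=
      hγ₄.update_univ hcL hcne
    have hval₅ : RecolSeqOn G L S (Function.update (applySteps γ ins) u c) ρ' := by
      refine hval'.congr ?_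
      intro x hx
      rcases eq_or_ne x u with rfl | hxu
      · simp
      · rw [Function.update_of_ne hxu, Function.update_of_ne hxu]
        exact (hinsS x hx).symm
    set K₅ : Fin 4 → ℕ := fun j => if G.Adj u (W j) then K₄ j - 1 else K₄ j with hK5def
    have hcov₅ : ∀ j, Cov G (W j) (Function.update (applySteps γ ins) u c) (K₅ j) ρ' := by
      intro j q hq
      rw [Function.update_of_ne (hunW j).symm]
      by_cases hadj : G.Adj u (W j)
      · refine hcov4 j q ?_
        rw [relSteps_cons_pos hadj]
        simp only [hK5def, if_pos hadj] at hq
        have h1 : 1 ≤ K₄ j := hK4 j j.isLt hadj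
        obtain ⟨k, hk⟩ : ∃ k, K₄ j = k + 1 := ⟨K₄ j - 1, by omega⟩
        rw [hk, List.take_succ_cons]
        refine List.mem_cons_of_mem _ ?_
        rwa [hk, Nat.add_sub_cancel] at hq
      · refine hcov4 j q ?_
        rw [relSteps_cons_neg hadj]
        simpa only [hK5def, if_neg hadj] using hq
    obtain ⟨τ', ih1, ih2, ih3, ih4, ih5⟩ :=
      ih (Function.update (applySteps γ ins) u c) K₅ R₄ hγ₅ hval₅ hcov₅
    refine ⟨ins ++ (u, c) :: τ', ?_, ?_, ?_, ?_, ?_⟩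
    · exact recolSeqOn_append hrseq (recolSeqOn_cons.2 ⟨trivial, hγ₄, ih1⟩)
    · intro x hx
      rw [applySteps_append, applySteps_cons, applySteps_cons]
      rw [ih2 x hx]
      refine applySteps_congr ?_ ρ' hval₅.1 x hx
      intro y hy
      rcases eq_or_ne y u with rfl | hyu
      · simp
      · rw [Function.update_of_ne hyu, Function.update_of_ne hyu]
        exact hinsS y hy
    · intro x hx
      rw [recolors_append, recolors_cons, recolors_cons, ih3 x hx]
      have h0 : recolors ins x = 0 := by
        refine recolors_eq_zero ?_
        intro q hq he
        rcases hsteps q hq with h | ⟨i, h⟩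
        · rw [h] at he; exact hvS (he ▸ hx)
        · rw [h] at he; exact hWS i (he ▸ hx)
      omega
    · intro j
      rw [recolors_append, recolors_cons, if_neg (hunW j)]
      have e1 : mcount G (W j) ρ' - K₅ j = mcount G (W j) ((u, c) :: ρ') - K₄ j := by
        by_cases hadj : G.Adj u (W j)
        · have h1 : 1 ≤ K₄ j := hK4 j j.isLt hadj
          have h2 : mcount G (W j) ((u, c) :: ρ') = mcount G (W j) ρ' + 1 := by
            rw [mcount, relSteps_cons_pos hadj]
            simp [mcount]
          simp only [hK5def, if_pos hadj]
          omega
        · have h2 : mcount G (W j) ((u, c) :: ρ') = mcount G (W j) ρ' := by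
            unfold mcount
            rw [relSteps_cons_neg hadj]
          simp only [hK5def, if_neg hadj]
          omega
      have h3 := ih4 j
      rw [e1] at h3
      have h4 := hphi4 j
      omega
    · rw [recolors_append, recolors_cons, if_neg hunS]
      omega
lemma batch_recolor
    (G : SimpleGraph V) [DecidableRel G.Adj] (L : V → Finset ℕ)
    (W : Fin 4 → V) (β : V → ℕ)
    (hW : Function.Injective W)
    (hWnadj : ∀ i j, ¬ G.Adj (W i) (W j)) :
    ∀ (J : List (Fin 4)) (γ : V → ℕ),
      ProperOn G L Set.univ γ →
      (∀ i ∈ J, β (W i) ∈ L (W i)) →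
      (∀ i ∈ J, ∀ x, G.Adj (W i) x → β (W i) ≠ γ x) →
      RecolSeqOn G L Set.univ γ (J.map (fun i => (W i, β (W i)))) ∧
      (∀ x : V, (∀ i ∈ J, W i ≠ x) →
        applySteps γ (J.map (fun i => (W i, β (W i)))) x = γ x) ∧
      (∀ i ∈ J, applySteps γ (J.map (fun i => (W i, β (W i)))) (W i) = β (W i)) := by
  intro J
  induction J with
  | nil =>
    intro γ hγ _ _
    exact ⟨recolSeqOn_nil.2 hγ, fun x _ => rfl, fun i hi => absurd hi (List.not_mem_nil)⟩
  | cons j J' ihJ =>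
    intro γ hγ hmem hnb
    have hprop : ProperOn G L Set.univ (Function.update γ (W j) (β (W j))) := by
      refine hγ.update_univ (hmem j (List.mem_cons_self)) ?_
      exact hnb j (List.mem_cons_self)
    have hnb' : ∀ i ∈ J', ∀ x, G.Adj (W i) x →
        β (W i) ≠ Function.update γ (W j) (β (W j)) x := by
      intro i hi x hx
      rcases eq_or_ne x (W j) with rfl | hxj
      · exact absurd hx (hWnadj i j)
      · rw [Function.update_of_ne hxj]
        exact hnb i (List.mem_cons_of_mem _ hi) x hx
    obtain ⟨ih1, ih2, ih3⟩ := ihJ (Function.update γ (W j) (β (W j))) hprop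
      (fun i hi => hmem i (List.mem_cons_of_mem _ hi)) hnb'
    refine ⟨?_, ?_, ?_⟩
    · rw [List.map_cons]
      exact recolSeqOn_cons.2 ⟨trivial, hγ, ih1⟩
    · intro x hx
      rw [List.map_cons, applySteps_cons]
      rw [ih2 x (fun i hi => hx i (List.mem_cons_of_mem _ hi))]
      exact Function.update_of_ne (Ne.symm (hx j (List.mem_cons_self))) _ _
    · intro i hi
      rw [List.map_cons, applySteps_cons]
      by_cases hiJ : i ∈ J'
      · exact ih3 i hiJ
      · have hij : i = j := by
          rcases List.mem_cons.1 hi with h | h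
          · exact h
          · exact absurd h hiJ
        subst hij
        rw [ih2 (W i) (fun i' hi' he => hiJ ((hW he) ▸ hi'))]
        exact Function.update_self _ _ _
lemma countP_eq_le_one {α : Type*} [DecidableEq α] {l : List α} (h : l.Nodup) (j : α) :
    l.countP (fun a => decide (a = j)) ≤ 1 := by
  induction l with
  | nil => simp
  | cons a l ihl =>
    rw [List.countP_cons]
    rw [List.nodup_cons] at h
    by_cases haj : a = j
    · subst haj
      have h0 : l.countP (fun b => decide (b = a)) = 0 := by
        rw [List.countP_eq_zero]
        intro b hb
        simp only [decide_eq_true_eq]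
        intro hba
        exact h.1 (hba ▸ hb)
      simp [h0]
    · simpa [haj] using ihl h.2

lemma countP_eq_zero_of_not_mem {α : Type*} [DecidableEq α] {l : List α} {j : α}
    (h : j ∉ l) : l.countP (fun a => decide (a = j)) = 0 := by
  rw [List.countP_eq_zero]
  intro b hb
  simp only [decide_eq_true_eq]
  intro hbj
  exact h (hbj ▸ hb)

lemma recolors_map_W {W : Fin 4 → V} (hW : Function.Injective W) (β : V → ℕ)
    (J : List (Fin 4)) (j : Fin 4) :
    recolors (J.map (fun i => (W i, β (W i)))) (W j)
      = J.countP (fun a => decide (a = j)) := by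
  rw [recolors, List.countP_map]
  refine List.countP_congr ?_
  intro a _
  simp only [Function.comp, decide_eq_true_eq]
  exact ⟨fun h => hW h, fun h => h ▸ rfl⟩

lemma recolors_map_W_ne {W : Fin 4 → V} (β : V → ℕ) (J : List (Fin 4)) {x : V}
    (hx : ∀ i, W i ≠ x) :
    recolors (J.map (fun i => (W i, β (W i)))) x = 0 := by
  refine recolors_eq_zero ?_
  intro q hq
  obtain ⟨i, _, rfl⟩ := List.mem_map.1 hq
  exact hx i

/-- Fix a graph `G`, a 6-assignment `L`, and `L`-colorings `α`, `β`.  Suppose `G`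
has a 4-vertex `v` with four pairwise nonadjacent 3-neighbors `w₁, w₂, w₃, w₄`,
and let `G' := G − {v, w₁, w₂, w₃, w₄}`.  If `G'` has a 12-good `L`-recoloring
sequence transforming `α↾G'` into `β↾G'`, then `G` has a 12-good `L`-recoloring
sequence transforming `α` into `β`. -/
theorem reducible_deg4_with_four_deg3_nbrs (G : SimpleGraph V) [DecidableRel G.Adj]
    (L : V → Finset ℕ) (hL : ∀ v, (L v).card = 6)
    (α β : V → ℕ)
    (hα : ProperOn G L Set.univ α) (hβ : ProperOn G L Set.univ β)
    (v w₁ w₂ w₃ w₄ : V) (hdv : G.degree v = 4)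
    (ha1 : G.Adj v w₁) (ha2 : G.Adj v w₂) (ha3 : G.Adj v w₃) (ha4 : G.Adj v w₄)
    (hnd : ([w₁, w₂, w₃, w₄] : List V).Nodup)
    (hd1 : G.degree w₁ = 3) (hd2 : G.degree w₂ = 3)
    (hd3 : G.degree w₃ = 3) (hd4 : G.degree w₄ = 3)
    (hnadj : ∀ i ∈ [w₁, w₂, w₃, w₄], ∀ j ∈ [w₁, w₂, w₃, w₄], ¬ G.Adj i j)
    (hind : ∃ σ' : List (V × ℕ),
      RecolSeqOn G L {u | u ≠ v ∧ u ≠ w₁ ∧ u ≠ w₂ ∧ u ≠ w₃ ∧ u ≠ w₄} α σ' ∧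
      (∀ u, u ≠ v → u ≠ w₁ → u ≠ w₂ → u ≠ w₃ → u ≠ w₄ →
        applySteps α σ' u = β u) ∧
      ∀ u, recolors σ' u ≤ 12) :
    ∃ σ : List (V × ℕ),
      RecolSeqOn G L Set.univ α σ ∧
      applySteps α σ = β ∧
      ∀ u, recolors σ u ≤ 12 := by
  classical
  obtain ⟨σ', hval', hfin', hcnt'⟩ := hind
  set S : Set V := {u | u ≠ v ∧ u ≠ w₁ ∧ u ≠ w₂ ∧ u ≠ w₃ ∧ u ≠ w₄} with hSdef
  have hdistinct : w₁ ≠ w₂ ∧ w₁ ≠ w₃ ∧ w₁ ≠ w₄ ∧ w₂ ≠ w₃ ∧ w₂ ≠ w₄ ∧ w₃ ≠ w₄ := by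
    simp only [List.nodup_cons, List.mem_cons, List.not_mem_nil, List.mem_singleton,
      List.nodup_nil] at hnd
    push_neg at hnd
    tauto
  obtain ⟨h12, h13, h14, h23, h24, h34⟩ := hdistinct
  set W : Fin 4 → V := ![w₁, w₂, w₃, w₄] with hWdef
  have hW0 : W 0 = w₁ := rfl
  have hW1 : W 1 = w₂ := rfl
  have hW2 : W 2 = w₃ := rfl
  have hW3 : W 3 = w₄ := rfl
  have hWinj : Function.Injective W := by
    intro a b hab
    fin_cases a <;> fin_cases b <;> simp_all [hWdef]
  have hWadjv : ∀ i, G.Adj v (W i) := by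
    intro i
    fin_cases i
    · exact ha1
    · exact ha2
    · exact ha3
    · exact ha4
  have hvW : ∀ i, v ≠ W i := fun i => (hWadjv i).ne
  have hWdeg : ∀ i, G.degree (W i) = 3 := by
    intro i
    fin_cases i
    · exact hd1
    · exact hd2
    · exact hd3
    · exact hd4
  have hWnadj : ∀ i j, ¬ G.Adj (W i) (W j) := by
    intro i j
    fin_cases i <;> fin_cases j <;> exact hnadj _ (by simp [hWdef]) _ (by simp [hWdef])
  have hvS : v ∉ S := by simp [hSdef]
  have hWS : ∀ i, W i ∉ S := by
    intro i
    fin_cases i <;> simp [hSdef, hWdef]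
  have htot : ∀ x, x ∈ S ∨ x = v ∨ ∃ i, x = W i := by
    intro x
    by_cases h1 : x = v
    · exact Or.inr (Or.inl h1)
    by_cases h2 : x = w₁
    · exact Or.inr (Or.inr ⟨0, h2⟩)
    by_cases h3 : x = w₂
    · exact Or.inr (Or.inr ⟨1, h3⟩)
    by_cases h4 : x = w₃
    · exact Or.inr (Or.inr ⟨2, h4⟩)
    by_cases h5 : x = w₄
    · exact Or.inr (Or.inr ⟨3, h5⟩)
    · exact Or.inl ⟨h1, h2, h3, h4, h5⟩
  have hTsub : ({w₁, w₂, w₃, w₄} : Finset V) ⊆ G.neighborFinset v := by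
    intro x hx
    rw [SimpleGraph.mem_neighborFinset]
    simp only [Finset.mem_insert, Finset.mem_singleton] at hx
    rcases hx with rfl | rfl | rfl | rfl
    exacts [ha1, ha2, ha3, ha4]
  have hTcard : ({w₁, w₂, w₃, w₄} : Finset V).card = 4 := by
    rw [Finset.card_insert_of_notMem (by simp [h12, h13, h14]),
      Finset.card_insert_of_notMem (by simp [h23, h24]),
      Finset.card_insert_of_notMem (by simp [h34]), Finset.card_singleton]
  have hNv : G.neighborFinset v = {w₁, w₂, w₃, w₄} := by
    refine (Finset.eq_of_subset_of_card_le hTsub ?_).symm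
    rw [hTcard, G.card_neighborFinset_eq_degree, hdv]
  have hadjv : ∀ x, G.Adj v x → ∃ i, x = W i := by
    intro x hx
    have hmem : x ∈ G.neighborFinset v := by
      rw [SimpleGraph.mem_neighborFinset]
      exact hx
    rw [hNv] at hmem
    simp only [Finset.mem_insert, Finset.mem_singleton] at hmem
    rcases hmem with rfl | rfl | rfl | rfl
    exacts [⟨0, rfl⟩, ⟨1, rfl⟩, ⟨2, rfl⟩, ⟨3, rfl⟩]
  have hAB : ∀ i : Fin 4, ∃ ab : V × V, ab.1 ∈ S ∧ ab.2 ∈ S ∧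
      ∀ x, G.Adj (W i) x → x = v ∨ x = ab.1 ∨ x = ab.2 := by
    intro i
    have hvmem : v ∈ G.neighborFinset (W i) := by
      rw [SimpleGraph.mem_neighborFinset]
      exact (hWadjv i).symm
    have hcard2 : ((G.neighborFinset (W i)).erase v).card = 2 := by
      rw [Finset.card_erase_of_mem hvmem, G.card_neighborFinset_eq_degree, hWdeg i]
    obtain ⟨a, b, hab, habs⟩ := Finset.card_eq_two.1 hcard2
    have hmemS : ∀ y ∈ (G.neighborFinset (W i)).erase v, y ∈ S := by
      intro y hy
      have hyv : y ≠ v := (Finset.mem_erase.1 hy).1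
      have hyadj : G.Adj (W i) y := by
        have hh := (Finset.mem_erase.1 hy).2
        rwa [SimpleGraph.mem_neighborFinset] at hh
      rcases htot y with hS | rfl | ⟨j, rfl⟩
      · exact hS
      · exact absurd rfl hyv
      · exact absurd hyadj (hWnadj i j)
    refine ⟨(a, b), hmemS a (by rw [habs]; simp), hmemS b (by rw [habs]; simp), ?_⟩
    intro x hx
    by_cases hxv : x = v
    · exact Or.inl hxv
    · have hxe : x ∈ (G.neighborFinset (W i)).erase v :=
        Finset.mem_erase.2 ⟨hxv, by rw [SimpleGraph.mem_neighborFinset]; exact hx⟩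
      rw [habs] at hxe
      simp only [Finset.mem_insert, Finset.mem_singleton] at hxe
      exact Or.inr hxe
  choose AB hAS hBS hadjW using hAB
  obtain ⟨τ, hτ1, hτ2, hτ3, hτ4, hτ5⟩ :=
    main_ind G L S v W (fun i => (AB i).1) (fun i => (AB i).2) hWinj hL hvS hWS hvW hadjv
      hadjW hAS hBS htot σ' α (fun _ => 0) (fun _ => 2) hα hval' (fun _ => cov_zero)
  have hm24 : ∀ i, mcount G (W i) σ' ≤ 24 := by
    intro i
    have h1 : mcount G (W i) σ' = σ'.countP (fun q => decide (G.Adj q.1 (W i))) := by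
      rw [mcount, relSteps, ← List.countP_eq_length_filter]
    have h2 : σ'.countP (fun q => decide (G.Adj q.1 (W i)))
        ≤ recolors σ' ((AB i).1) + recolors σ' ((AB i).2) := by
      refine countP_le_two ?_
      intro q hq hp
      have hadj : G.Adj (W i) q.1 := (by simpa using hp : G.Adj q.1 (W i)).symm
      have hqS : q.1 ∈ S := hval'.1 q hq
      rcases hadjW i q.1 hadj with h | h | h
      · exact absurd (h ▸ hqS) hvS
      · exact Or.inl h
      · exact Or.inr h
    have hA12 := hcnt' ((AB i).1)
    have hB12 := hcnt' ((AB i).2)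
    omega
  set γ1 : V → ℕ := applySteps α τ with hγ1def
  have hγ1 : ProperOn G L Set.univ γ1 := hτ1.proper_final
  have hγ1S : ∀ x ∈ S, γ1 x = β x := by
    intro x hx
    rw [hτ2 x hx]
    obtain ⟨hx1, hx2, hx3, hx4, hx5⟩ := hx
    exact hfin' x hx1 hx2 hx3 hx4 hx5
  set y : ℕ := γ1 v with hydef
  set J₁ : List (Fin 4) := (List.finRange 4).filter (fun i => decide (β (W i) ≠ y))
    with hJ1def
  set J₂ : List (Fin 4) := (List.finRange 4).filter (fun i => decide (β (W i) = y))
    with hJ2def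
  have hJ1mem : ∀ i, i ∈ J₁ ↔ β (W i) ≠ y := by
    intro i
    simp [hJ1def, List.mem_filter]
  have hJ2mem : ∀ i, i ∈ J₂ ↔ β (W i) = y := by
    intro i
    simp [hJ2def, List.mem_filter]
  have hJ1nd : J₁.Nodup := (List.nodup_finRange 4).filter _
  have hJ2nd : J₂.Nodup := (List.nodup_finRange 4).filter _
  have hβW : ∀ i, β (W i) ∈ L (W i) := fun i => hβ.1 _ trivial
  have hnb1 : ∀ i ∈ J₁, ∀ x, G.Adj (W i) x → β (W i) ≠ γ1 x := by
    intro i hi x hx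
    rcases hadjW i x hx with rfl | rfl | rfl
    · rw [← hydef]
      exact (hJ1mem i).1 hi
    · rw [hγ1S _ (hAS i)]
      exact hβ.2 _ trivial _ trivial hx
    · rw [hγ1S _ (hBS i)]
      exact hβ.2 _ trivial _ trivial hx
  obtain ⟨hb1, hb1ne, hb1eq⟩ :=
    batch_recolor G L W β hWinj hWnadj J₁ γ1 hγ1 (fun i _ => hβW i) hnb1
  set E₁ : List (V × ℕ) := J₁.map (fun i => (W i, β (W i))) with hE1def
  set γ2 : V → ℕ := applySteps γ1 E₁ with hγ2def
  have hγ2 : ProperOn G L Set.univ γ2 := hb1.proper_final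
  have hγ2v : γ2 v = y := by
    rw [hb1ne v (fun i _ => Ne.symm (hvW i))]
  have hγ2S : ∀ x ∈ S, γ2 x = β x := by
    intro x hx
    rw [hb1ne x (fun i _ he => hWS i (by rw [he]; exact hx))]
    exact hγ1S x hx
  have hγ2W1 : ∀ j ∈ J₁, γ2 (W j) = β (W j) := hb1eq
  have hγ2W2 : ∀ j, j ∉ J₁ → γ2 (W j) = γ1 (W j) := by
    intro j hj
    exact hb1ne (W j) (fun i hi he => hj ((hWinj he) ▸ hi))
  have hFz : (insert (γ2 (W 0)) (insert (γ2 (W 1)) (insert (γ2 (W 2))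
      (insert (γ2 (W 3)) ({y} : Finset ℕ))))).card ≤ 5 := by
    have k1 : (insert (γ2 (W 3)) ({y} : Finset ℕ)).card ≤ 2 :=
      (Finset.card_insert_le _ _).trans (by simp)
    have k2 : (insert (γ2 (W 2)) (insert (γ2 (W 3)) ({y} : Finset ℕ))).card ≤ 3 :=
      (Finset.card_insert_le _ _).trans (by omega)
    have k3 : (insert (γ2 (W 1)) (insert (γ2 (W 2))
        (insert (γ2 (W 3)) ({y} : Finset ℕ)))).card ≤ 4 :=
      (Finset.card_insert_le _ _).trans (by omega)
    exact (Finset.card_insert_le _ _).trans (by omega)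
  obtain ⟨z, hzL, hzF⟩ := exists_notin (hL v) hFz
  have hzW : ∀ j, z ≠ γ2 (W j) := by
    intro j
    fin_cases j <;> exact fun h => hzF (by rw [h]; simp)
  have hzy : z ≠ y := fun h => hzF (by rw [h]; simp)
  set γ3 : V → ℕ := Function.update γ2 v z with hγ3def
  have hγ3 : ProperOn G L Set.univ γ3 := by
    refine hγ2.update_univ hzL ?_
    intro x hx
    obtain ⟨j, rfl⟩ := hadjv x hx
    exact hzW j
  have hγ3S : ∀ x ∈ S, γ3 x = β x := by
    intro x hx
    rw [hγ3def, Function.update_of_ne (show x ≠ v from fun he => hvS (by rw [← he]; exact hx))]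
    exact hγ2S x hx
  have hγ3W : ∀ j, γ3 (W j) = γ2 (W j) := by
    intro j
    rw [hγ3def]
    exact Function.update_of_ne (Ne.symm (hvW j)) _ _
  have hnb2 : ∀ i ∈ J₂, ∀ x, G.Adj (W i) x → β (W i) ≠ γ3 x := by
    intro i hi x hx
    rcases hadjW i x hx with rfl | rfl | rfl
    · rw [hγ3def, Function.update_self, (hJ2mem i).1 hi]
      exact fun h => hzy h.symm
    · rw [hγ3S _ (hAS i)]
      exact hβ.2 _ trivial _ trivial hx
    · rw [hγ3S _ (hBS i)]
      exact hβ.2 _ trivial _ trivial hx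
  obtain ⟨hb2, hb2ne, hb2eq⟩ :=
    batch_recolor G L W β hWinj hWnadj J₂ γ3 hγ3 (fun i _ => hβW i) hnb2
  set E₂ : List (V × ℕ) := J₂.map (fun i => (W i, β (W i))) with hE2def
  set γ4 : V → ℕ := applySteps γ3 E₂ with hγ4def
  have hγ4 : ProperOn G L Set.univ γ4 := hb2.proper_final
  have hγ4W : ∀ j, γ4 (W j) = β (W j) := by
    intro j
    by_cases hjy : β (W j) = y
    · exact hb2eq j ((hJ2mem j).2 hjy)
    · rw [hb2ne (W j) (fun i hi he => hjy ((hWinj he) ▸ (hJ2mem i).1 hi)), hγ3W j]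
      exact hγ2W1 j ((hJ1mem j).2 hjy)
  have hγ4S : ∀ x ∈ S, γ4 x = β x := by
    intro x hx
    rw [hb2ne x (fun i _ he => hWS i (by rw [he]; exact hx))]
    exact hγ3S x hx
  have hfinprop : ProperOn G L Set.univ (Function.update γ4 v (β v)) := by
    refine hγ4.update_univ (hβ.1 v trivial) ?_
    intro x hx
    obtain ⟨j, rfl⟩ := hadjv x hx
    rw [hγ4W j]
    exact hβ.2 v trivial _ trivial (hWadjv j)
  refine ⟨τ ++ (E₁ ++ (v, z) :: (E₂ ++ [(v, β v)])), ?_, ?_, ?_⟩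
  · refine recolSeqOn_append hτ1 ?_
    rw [← hγ1def]
    refine recolSeqOn_append hb1 ?_
    rw [← hγ2def]
    refine recolSeqOn_cons.2 ⟨trivial, hγ2, ?_⟩
    rw [← hγ3def]
    refine recolSeqOn_append hb2 ?_
    rw [← hγ4def]
    exact recolSeqOn_cons.2 ⟨trivial, hγ4, recolSeqOn_nil.2 hfinprop⟩
  · have hcompute : applySteps α (τ ++ (E₁ ++ (v, z) :: (E₂ ++ [(v, β v)])))
        = Function.update γ4 v (β v) := by
      rw [applySteps_append, applySteps_append, applySteps_cons, applySteps_append,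
        ← hγ1def, ← hγ2def, ← hγ3def, ← hγ4def]
      rfl
    rw [hcompute]
    funext x
    rcases htot x with hS | hxv | ⟨j, hxj⟩
    · rw [Function.update_of_ne (fun he => hvS (by rw [← he]; exact hS))]
      exact hγ4S x hS
    · subst hxv
      rw [Function.update_self]
    · subst hxj
      rw [Function.update_of_ne (Ne.symm (hvW j))]
      exact hγ4W j
  · intro x
    rcases htot x with hS | hxv | ⟨j, hxj⟩
    · rw [recolors_append, recolors_append, recolors_cons, recolors_append,
        recolors_cons, recolors_nil]
      have hE1x : recolors E₁ x = 0 :=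
        recolors_map_W_ne β J₁ (fun i he => hWS i (by rw [he]; exact hS))
      have hE2x : recolors E₂ x = 0 :=
        recolors_map_W_ne β J₂ (fun i he => hWS i (by rw [he]; exact hS))
      have hvx : ¬ (v = x) := fun he => hvS (by rw [he]; exact hS)
      rw [hτ3 x hS, hE1x, hE2x, if_neg hvx]
      have := hcnt' x
      omega
    · subst hxv
      rw [recolors_append, recolors_append, recolors_cons, recolors_append,
        recolors_cons, recolors_nil]
      have hE1v : recolors E₁ x = 0 := recolors_map_W_ne β J₁ (fun i => Ne.symm (hvW i))
      have hE2v : recolors E₂ x = 0 := recolors_map_W_ne β J₂ (fun i => Ne.symm (hvW i))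
      rw [hE1v, hE2v, if_pos rfl]
      have h8 : recolors τ x ≤ 8 := by
        have h := hτ5
        simpa using h
      omega
    · subst hxj
      rw [recolors_append, recolors_append, recolors_cons, recolors_append,
        recolors_cons, recolors_nil]
      have hWv : ¬ (v = W j) := hvW j
      rw [if_neg hWv]
      have hτb : recolors τ (W j) ≤ 11 := by
        have h1 := hτ4 j
        have h2 : phi0 (mcount G (W j) σ' - 0) 2 ≤ phi0 24 2 :=
          phi0_mono_left 2 (by have := hm24 j; omega)
        rw [phi0_24_2] at h2
        omega
      have hE1j : recolors E₁ (W j) = J₁.countP (fun a => decide (a = j)) :=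
        recolors_map_W hWinj β J₁ j
      have hE2j : recolors E₂ (W j) = J₂.countP (fun a => decide (a = j)) :=
        recolors_map_W hWinj β J₂ j
      by_cases hjy : β (W j) = y
      · have hj1 : j ∉ J₁ := fun h => ((hJ1mem j).1 h) hjy
        have c1 : J₁.countP (fun a => decide (a = j)) = 0 := countP_eq_zero_of_not_mem hj1
        have c2 : J₂.countP (fun a => decide (a = j)) ≤ 1 := countP_eq_le_one hJ2nd j
        omega
      · have hj2 : j ∉ J₂ := fun h => hjy ((hJ2mem j).1 h)
        have c1 : J₁.countP (fun a => decide (a = j)) ≤ 1 := countP_eq_le_one hJ1nd j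
        have c2 : J₂.countP (fun a => decide (a = j)) = 0 := countP_eq_zero_of_not_mem hj2
        omega
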